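/- If P = ∅, then there exists k* ∈ ℕ such that Q^{k*} ≠ ∅ and Q^{k*+1} = ∅; in particular the intersection over all k ∈ ℕ of the sets Qᵏ is empty. -/

import Mathlib

/-!
If `Qᵏ` never became empty, the infima `aₖ = inf Qᵏ` would lie in `Qᵏ` (the sets are closed)
and increase to some `L ≤ 1`. Since `P = ∅`, compactness gives a uniform gap `m - u* ≥ ε > 0`,
so membership of `aₖ₊₁` in `Qᵏ⁺¹` forces `m(aₖ₊₁) + (1-δ)ε/δ ≤ Uᵏ(aₖ₊₁)`. But `Uᵏ(aₖ₊₁)` tends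
to `m(L)`: for `L < 1` by continuity of the chord formula, for `L = 1` because it lies between
`m(aₖ)` and `m(1)`. Passing to the limit gives `m(L) + (1-δ)ε/δ ≤ m(L)`.
-/

open Classical in
/-- The decreasing sequence of sets `Qᵏ`: `Q⁰ = [0,1]` and
`Q^{k+1} = {q ∈ Qᵏ : (1−δ)·u*(q) + δ·Uᵏ(q) ≥ m(q)}`, where `Uᵏ` is the chord of `m`
from `(inf Qᵏ, m(inf Qᵏ))` to `(1, m(1))` (constant `m(1)` if `inf Qᵏ = 1`). -/
noncomputable def Qseq (m ustar : ℝ → ℝ) (δ : ℝ) : ℕ → Set ℝ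
  | 0 => Set.Icc 0 1
  | k + 1 =>
      if Qseq m ustar δ k = ∅ then (∅ : Set ℝ)
      else
        {q ∈ Qseq m ustar δ k |
          (1 - δ) * ustar q +
            δ * (if sInf (Qseq m ustar δ k) < 1 then
                ((1 - q) * m (sInf (Qseq m ustar δ k))
                  + (q - sInf (Qseq m ustar δ k)) * m 1) / (1 - sInf (Qseq m ustar δ k))
              else m 1)
          ≥ m q}

open Set Filter Topology

/-- The chord `Uᵏ` of the definition of `Qseq`, with `a = inf Qᵏ`. -/
noncomputable def chordToOne (f : ℝ → ℝ) (a q : ℝ) : ℝ :=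
  if a < 1 then ((1 - q) * f a + (q - a) * f 1) / (1 - a) else f 1

section chordToOne

variable {f : ℝ → ℝ}

lemma chordToOne_of_lt {a : ℝ} (ha : a < 1) (q : ℝ) :
    chordToOne f a q = ((1 - q) * f a + (q - a) * f 1) / (1 - a) :=
  if_pos ha

lemma continuous_chordToOne (a : ℝ) : Continuous (chordToOne f a) := by
  unfold chordToOne
  split_ifs
  · exact Continuous.div_const (by fun_prop) _
  · exact continuous_const

lemma chordToOne_mem_uIcc {a q : ℝ} (ha : a < 1) (haq : a ≤ q) (hq : q ≤ 1) :
    chordToOne f a q ∈ uIcc (f a) (f 1) := by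
  have hpos : 0 < 1 - a := by linarith
  set t := (q - a) / (1 - a)
  have ht0 : 0 ≤ t := div_nonneg (by linarith) hpos.le
  have ht1 : t ≤ 1 := (div_le_one hpos).2 (by linarith)
  have hcombo : chordToOne f a q = (1 - t) • f a + t • f 1 := by
    rw [chordToOne_of_lt ha, smul_eq_mul, smul_eq_mul]
    simp only [t]
    field_simp
    ring
  rw [hcombo]
  exact convex_uIcc _ _ left_mem_uIcc right_mem_uIcc (by linarith) ht0 (by ring)

lemma tendsto_chordToOne_of_monotone {a : ℕ → ℝ} {L : ℝ} (hmono : Monotone a)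
    (ha1 : ∀ k, a k < 1) (haL : Tendsto a atTop (𝓝 L))
    (hfa : Tendsto (fun k ↦ f (a k)) atTop (𝓝 (f L))) :
    Tendsto (fun k ↦ chordToOne f (a k) (a (k + 1))) atTop (𝓝 (f L)) := by
  have haL' : Tendsto (fun k ↦ a (k + 1)) atTop (𝓝 L) := haL.comp (tendsto_add_atTop_nat 1)
  rcases (le_of_tendsto' haL fun k ↦ (ha1 k).le).lt_or_eq with hL | rfl
  · have hlim : Tendsto (fun k ↦ ((1 - a (k + 1)) * f (a k) + (a (k + 1) - a k) * f 1) / (1 - a k))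
        atTop (𝓝 (((1 - L) * f L + (L - L) * f 1) / (1 - L))) :=
      (((tendsto_const_nhds.sub haL').mul hfa).add ((haL'.sub haL).mul tendsto_const_nhds)).div
        (tendsto_const_nhds.sub haL) (sub_ne_zero.2 hL.ne')
    have hval : ((1 - L) * f L + (L - L) * f 1) / (1 - L) = f L := by
      field_simp [sub_ne_zero.2 hL.ne']
      ring
    simpa only [chordToOne_of_lt (ha1 _), hval] using hlim
  · have hmem k : chordToOne f (a k) (a (k + 1)) ∈ uIcc (f (a k)) (f 1) :=
      chordToOne_mem_uIcc (ha1 k) (hmono k.le_succ) (ha1 (k + 1)).le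
    refine tendsto_of_tendsto_of_tendsto_of_le_of_le ?_ ?_ (fun k ↦ (hmem k).1) (fun k ↦ (hmem k).2)
    · simpa using hfa.min (tendsto_const_nhds (x := f 1))
    · simpa using hfa.max (tendsto_const_nhds (x := f 1))

lemma not_forall_add_le_chordToOne (hf : ContinuousOn f (Icc 0 1)) {a : ℕ → ℝ}
    (hmono : Monotone a) (ha0 : ∀ k, 0 ≤ a k) (ha1 : ∀ k, a k < 1) {c : ℝ} (hc : 0 < c) :
    ¬ ∀ k, f (a (k + 1)) + c ≤ chordToOne f (a k) (a (k + 1)) := by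
  intro hgap
  have hbdd : BddAbove (range a) := ⟨1, by rintro _ ⟨k, rfl⟩; exact (ha1 k).le⟩
  have haL : Tendsto a atTop (𝓝 (⨆ k, a k)) := tendsto_atTop_ciSup hmono hbdd
  have hL : (⨆ k, a k) ∈ Icc (0 : ℝ) 1 :=
    ⟨(ha0 0).trans (le_ciSup hbdd 0), ciSup_le fun k ↦ (ha1 k).le⟩
  have hfa : Tendsto (fun k ↦ f (a k)) atTop (𝓝 (f (⨆ k, a k))) :=
    (hf _ hL).tendsto.comp
      (tendsto_nhdsWithin_of_tendsto_nhds_of_eventually_within a haL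
        (Eventually.of_forall fun k ↦ ⟨ha0 k, (ha1 k).le⟩))
  have hle := le_of_tendsto_of_tendsto'
    ((hfa.comp (tendsto_add_atTop_nat 1)).add_const c)
    (tendsto_chordToOne_of_monotone hmono ha1 haL hfa) hgap
  linarith

end chordToOne

section Qseq

variable {m ustar : ℝ → ℝ} {δ : ℝ}

lemma Qseq_succ_of_nonempty {k : ℕ} (hk : (Qseq m ustar δ k).Nonempty) :
    Qseq m ustar δ (k + 1) = {q ∈ Qseq m ustar δ k |
      m q ≤ (1 - δ) * ustar q + δ * chordToOne m (sInf (Qseq m ustar δ k)) q} := by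
  rw [Qseq, if_neg hk.ne_empty]
  rfl

lemma Qseq_succ_subset (k : ℕ) : Qseq m ustar δ (k + 1) ⊆ Qseq m ustar δ k := by
  rcases (Qseq m ustar δ k).eq_empty_or_nonempty with hk | hk
  · simp [Qseq, hk]
  · rw [Qseq_succ_of_nonempty hk]
    exact sep_subset _ _

lemma Qseq_subset_Icc (k : ℕ) : Qseq m ustar δ k ⊆ Icc 0 1 := by
  induction k with
  | zero => exact subset_rfl
  | succ k ih => exact (Qseq_succ_subset k).trans ih

lemma isClosed_Qseq (hm : ContinuousOn m (Icc 0 1)) (hu : Continuous ustar) (k : ℕ) :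
    IsClosed (Qseq m ustar δ k) := by
  induction k with
  | zero => exact isClosed_Icc
  | succ k ih =>
    rcases (Qseq m ustar δ k).eq_empty_or_nonempty with hk | hk
    · simp [Qseq, hk]
    · rw [Qseq_succ_of_nonempty hk]
      have hchord := continuous_chordToOne (f := m) (sInf (Qseq m ustar δ k))
      exact ih.isClosed_le (hm.mono (Qseq_subset_Icc k)) (by fun_prop)

lemma add_le_chordToOne_of_mem_Qseq_succ (hδ0 : 0 < δ) (hδ1 : δ ≤ 1) {ε : ℝ}
    (hgap : ∀ q ∈ Icc (0 : ℝ) 1, ε ≤ m q - ustar q) {k : ℕ} (hk : (Qseq m ustar δ k).Nonempty)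
    {q : ℝ} (hq : q ∈ Qseq m ustar δ (k + 1)) :
    m q + (1 - δ) * ε / δ ≤ chordToOne m (sInf (Qseq m ustar δ k)) q := by
  rw [Qseq_succ_of_nonempty hk] at hq
  obtain ⟨hqk, hle⟩ := hq
  have hu := mul_le_mul_of_nonneg_left (hgap q (Qseq_subset_Icc k hqk)) (sub_nonneg.2 hδ1)
  rw [add_div' _ _ _ hδ0.ne', div_le_iff₀' hδ0]
  linarith

lemma exists_Qseq_eq_empty (hδ : δ ∈ Ioo 0 1) (hm : ContinuousOn m (Icc 0 1))
    (hu : Continuous ustar) {ε : ℝ} (hε : 0 < ε) (hgap : ∀ q ∈ Icc (0 : ℝ) 1, ε ≤ m q - ustar q) :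
    ∃ k, Qseq m ustar δ k = ∅ := by
  by_contra! hne
  have hbdd k : BddBelow (Qseq m ustar δ k) := bddBelow_Icc.mono (Qseq_subset_Icc k)
  set a : ℕ → ℝ := fun k ↦ sInf (Qseq m ustar δ k)
  have hmem k : a k ∈ Qseq m ustar δ k := (isClosed_Qseq hm hu k).csInf_mem (hne k) (hbdd k)
  have hmono : Monotone a := monotone_nat_of_le_succ fun k ↦
    csInf_le_csInf (hbdd k) (hne (k + 1)) (Qseq_succ_subset k)
  have hstep k : m (a (k + 1)) + (1 - δ) * ε / δ ≤ chordToOne m (a k) (a (k + 1)) :=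
    add_le_chordToOne_of_mem_Qseq_succ hδ.1 hδ.2.le hgap (hne k) (hmem (k + 1))
  have hc : 0 < (1 - δ) * ε / δ := div_pos (mul_pos (sub_pos.2 hδ.2) hε) hδ.1
  have ha1 k : a k < 1 := by
    refine (Qseq_subset_Icc k (hmem k)).2.lt_of_ne fun hk ↦ ?_
    have hk' : a (k + 1) = 1 :=
      le_antisymm (Qseq_subset_Icc _ (hmem (k + 1))).2 (hk ▸ hmono k.le_succ)
    have := hstep k
    rw [chordToOne, if_neg (by simp [hk]), hk'] at this
    linarith
  exact not_forall_add_le_chordToOne hm hmono (fun k ↦ (Qseq_subset_Icc k (hmem k)).1) ha1 hc hstep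

end Qseq

lemma exists_nonempty_and_succ_eq_empty {α : Type*} {s : ℕ → Set α} (h0 : (s 0).Nonempty)
    {k : ℕ} (hk : s k = ∅) : ∃ j, (s j).Nonempty ∧ s (j + 1) = ∅ := by
  induction k with
  | zero => exact absurd hk h0.ne_empty
  | succ k ih =>
    rcases (s k).eq_empty_or_nonempty with hk' | hk'
    · exact ih hk'
    · exact ⟨k, hk', hk⟩

lemma continuous_of_map_combo {u : ℝ → ℝ}
    (hu : ∀ x y t : ℝ, u ((1 - t) * x + t * y) = (1 - t) * u x + t * u y) : Continuous u := by
  have h : u = fun q ↦ (1 - q) * u 0 + q * u 1 := funext fun q ↦ by simpa using hu 0 1 q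
  rw [h]
  fun_prop

theorem Qseq_empty_in_finite_time_of_P_empty_general
    (m ustar : ℝ → ℝ) (δ : ℝ) (hδ : δ ∈ Set.Ioo (0 : ℝ) 1)
    (hcont : ContinuousOn m (Set.Icc (0 : ℝ) 1))
    (haff : ∀ x y t : ℝ, ustar ((1 - t) * x + t * y) = (1 - t) * ustar x + t * ustar y)
    (hle : ∀ p ∈ Set.Icc (0 : ℝ) 1, ustar p ≤ m p)
    (hP : {p ∈ Set.Icc (0 : ℝ) 1 | m p = ustar p} = ∅) :
    (∃ k : ℕ, (Qseq m ustar δ k).Nonempty ∧ Qseq m ustar δ (k + 1) = ∅) ∧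
    (⋂ k : ℕ, Qseq m ustar δ k) = ∅ := by
  have hu := continuous_of_map_combo haff
  have hlt : ∀ p ∈ Icc (0 : ℝ) 1, 0 < m p - ustar p := fun p hp ↦
    sub_pos.2 ((hle p hp).lt_of_ne fun h ↦ hP.subset ⟨hp, h.symm⟩)
  obtain ⟨ε, hε, hgap⟩ := isCompact_Icc.exists_forall_le' (hcont.sub hu.continuousOn) hlt
  obtain ⟨k, hk⟩ := exists_Qseq_eq_empty hδ hcont hu hε hgap
  obtain ⟨j, hj, hj'⟩ :=
    exists_nonempty_and_succ_eq_empty (s := Qseq m ustar δ) (nonempty_Icc.2 zero_le_one) hk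
  exact ⟨⟨j, hj, hj'⟩, subset_eq_empty (iInter_subset _ _) hk⟩

/-- if `P = ∅` then the sequence `Qᵏ` becomes empty in finitely many
steps, and in particular `⋂ₖ Qᵏ = ∅`. -/
theorem Qseq_empty_in_finite_time_of_P_empty
    (m ustar : ℝ → ℝ) (δ : ℝ) (hδ : δ ∈ Set.Ioo (0 : ℝ) 1)
    (hconv : ConvexOn ℝ (Set.Icc (0 : ℝ) 1) m)
    (hcont : ContinuousOn m (Set.Icc (0 : ℝ) 1))
    (haff : ∀ x y t : ℝ, ustar ((1 - t) * x + t * y) = (1 - t) * ustar x + t * ustar y)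
    (hle : ∀ p ∈ Set.Icc (0 : ℝ) 1, ustar p ≤ m p)
    (hP : {p ∈ Set.Icc (0 : ℝ) 1 | m p = ustar p} = ∅) :
    (∃ k : ℕ, (Qseq m ustar δ k).Nonempty ∧ Qseq m ustar δ (k + 1) = ∅) ∧
    (⋂ k : ℕ, Qseq m ustar δ k) = ∅ :=
  Qseq_empty_in_finite_time_of_P_empty_general m ustar δ hδ hcont haff hle hP
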